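/- arXiv:2211.16983 — 5 statements merged into one kernel-verified Lean document; each statement's English description precedes it below -/
import Mathlib

section
/- For a nontrivial finite group G, the minimal number of elements generating G as a normal subgroup (i.e., the least d such that there exist g_1,...,g_d whose normal closure is G) equals max(d(G^ab), 1), where d(G^ab) is the minimal number of generators of the abelianization of G. -/
/-!
A normal generating set of `G` maps onto a generating set of the abelian group `Gᵃᵇ`, in which
normal closures are closures, and the empty set normally generates only the trivial group; this
gives the lower bound.

For the upper bound, a tuple of `G` whose image generates `Gᵃᵇ` can be corrected by commutators
into a tuple that normally generates `G`. Induct on `|G|`: take a minimal normal subgroup `N`,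
correct the tuple modulo `N` and lift it back. The normal closure `K` of the lift satisfies
`K ⊔ N = G`, and by minimality either `N ≤ K`, so `K = G`, or `K ∩ N = 1`, so `K` centralizes
`N`. If `N` is abelian, `G ⧸ K` is a quotient of `N`, hence `[G, G] ≤ K` and again `K = G`. If `N`
is not abelian, then `N = [N, N] ≤ [G, G]`, and multiplying the lift by a suitable element of `N`
moves it outside the centralizer of `N` without changing its images in `G ⧸ N` and `Gᵃᵇ`.
-/

open Subgroup

section

variable {G : Type*} [Group G]

theorem Abelianization.of_surjective : Function.Surjective (of : G →* Abelianization G) :=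
  QuotientGroup.mk'_surjective _

theorem Abelianization.map_surjective {H : Type*} [Group H] {f : G →* H}
    (hf : Function.Surjective f) : Function.Surjective (map f) := by
  intro y
  obtain ⟨x, rfl⟩ := (of_surjective (G := H)).comp hf y
  exact ⟨of x, map_of f x⟩

theorem closure_image_eq_top_of_normalClosure_eq_top {A : Type*} [CommGroup A] {f : G →* A}
    (hf : Function.Surjective f) {s : Set G} (hs : normalClosure s = ⊤) :
    closure (f '' s) = ⊤ := by
  rw [← normalClosure_eq_self (closure _), normalClosure_closure_eq_normalClosure,
    ← map_normalClosure _ _ hf, hs, ← MonoidHom.range_eq_map, MonoidHom.range_eq_top.mpr hf]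

theorem closure_sup_commutator_eq_top {s : Set G}
    (hs : closure (Abelianization.of '' s) = ⊤) : closure s ⊔ commutator G = ⊤ := by
  rw [← Abelianization.ker_of, ← comap_map_eq, MonoidHom.map_closure, hs, comap_top]

theorem exists_apply_eq_and_of_eq {H : Type*} [Group H] {f : G →* H}
    (hf : Function.Surjective f) {g : G} {h : H}
    (hgh : Abelianization.of h = Abelianization.of (f g)) :
    ∃ g' : G, f g' = h ∧ Abelianization.of g' = Abelianization.of g := by
  have hmem : (f g)⁻¹ * h ∈ (commutator G).map f := by
    rw [map_commutator_eq, MonoidHom.range_eq_top.mpr hf, ← commutator_def,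
      ← Abelianization.ker_of, MonoidHom.mem_ker, map_mul, map_inv, hgh, inv_mul_cancel]
  obtain ⟨c, hc, hfc⟩ := hmem
  refine ⟨g * c, by rw [map_mul, hfc, mul_inv_cancel_left], ?_⟩
  rw [SetLike.mem_coe, ← Abelianization.ker_of, MonoidHom.mem_ker] at hc
  rw [map_mul, hc, mul_one]

theorem Subgroup.exists_mem_mul_notMem_of_not_le {H K : Subgroup G} (h : ¬H ≤ K) (y : G) :
    ∃ x ∈ H, y * x ∉ K := by
  obtain ⟨n, hnH, hnK⟩ := SetLike.not_le_iff_exists.mp h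
  by_cases hy : y ∈ K
  · exact ⟨n, hnH, fun hyn => hnK (by simpa using K.mul_mem (K.inv_mem hy) hyn)⟩
  · exact ⟨1, H.one_mem, by simpa using hy⟩

theorem Subgroup.le_centralizer_of_disjoint {K N : Subgroup G} [K.Normal] [N.Normal]
    (h : Disjoint K N) : K ≤ centralizer N :=
  commutator_eq_bot_iff_le_centralizer.mp (commutator_eq_bot_of_disjoint h)

theorem Subgroup.card_quotient_lt [Finite G] {N : Subgroup G} [N.Normal] (hN : N ≠ ⊥) :
    Nat.card (G ⧸ N) < Nat.card G := by
  rw [← index_mul_card N, ← index_eq_card]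
  exact (Nat.lt_mul_iff_one_lt_right (Nat.pos_of_ne_zero index_ne_zero_of_finite)).mpr
    ((one_lt_card_iff_ne_bot N).mpr hN)

namespace Subgroup

def IsMinimalNormal (N : Subgroup G) : Prop :=
  Minimal (fun H : Subgroup G => H.Normal ∧ H ≠ ⊥) N

theorem exists_isMinimalNormal [Finite G] [Nontrivial G] :
    ∃ N : Subgroup G, N.IsMinimalNormal :=
  exists_minimal_of_wellFoundedLT _ ⟨⊤, inferInstance, top_ne_bot⟩

namespace IsMinimalNormal

variable {N : Subgroup G}

theorem normal (hN : N.IsMinimalNormal) : N.Normal := hN.prop.1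

theorem ne_bot (hN : N.IsMinimalNormal) : N ≠ ⊥ := hN.prop.2

theorem disjoint_or_le (hN : N.IsMinimalNormal) (K : Subgroup G) [K.Normal] :
    Disjoint K N ∨ N ≤ K := by
  have := hN.normal
  refine or_iff_not_imp_left.mpr fun hKN => ?_
  have hle := hN.le_of_le ⟨inferInstance, disjoint_iff.not.mp hKN⟩ inf_le_right
  exact hle.trans inf_le_left

theorem le_commutator_of_not_isMulCommutative (hN : N.IsMinimalNormal)
    (hcomm : ¬IsMulCommutative N) : N ≤ _root_.commutator G := by
  have := hN.normal
  refine le_trans (b := ⁅N, N⁆) ?_ (commutator_mono le_top le_top)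
  refine (hN.disjoint_or_le ⁅N, N⁆).resolve_left fun hdisj => hcomm ?_
  rw [← commutator_self_eq_bot_iff, ← disjoint_self]
  exact hdisj.mono_right (commutator_le_left N N)

theorem exists_mem_commutator_mul_notMem_centralizer (hN : N.IsMinimalNormal) (y : G) :
    ∃ x ∈ N ⊓ _root_.commutator G, IsMulCommutative N ∨ y * x ∉ centralizer N := by
  by_cases hcomm : IsMulCommutative N
  · exact ⟨1, one_mem _, Or.inl hcomm⟩
  · obtain ⟨x, hxN, hx⟩ := exists_mem_mul_notMem_of_not_le
      (mt le_centralizer_iff_isMulCommutative.mp hcomm) y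
    exact ⟨x, ⟨hxN, hN.le_commutator_of_not_isMulCommutative hcomm hxN⟩, Or.inr hx⟩

theorem normalClosure_eq_top (hN : N.IsMinimalNormal) {s : Set G}
    (hsN : normalClosure s ⊔ N = ⊤) (hs : closure (Abelianization.of '' s) = ⊤)
    (hcent : IsMulCommutative N ∨ ∃ y ∈ s, y ∉ centralizer N) : normalClosure s = ⊤ := by
  have := hN.normal
  rcases hN.disjoint_or_le (normalClosure s) with hdisj | hle
  · rcases hcent with hcomm | ⟨y, hys, hy⟩
    · have hcomm := Normal.commutator_le_of_self_sup_commutative_eq_top hsN hcomm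
      exact top_unique <| (closure_sup_commutator_eq_top hs).symm.le.trans <|
        sup_le closure_le_normalClosure hcomm
    · exact absurd (le_centralizer_of_disjoint hdisj (subset_normalClosure hys)) hy
  · rwa [sup_eq_left.mpr hle] at hsN

end IsMinimalNormal

end Subgroup

theorem exists_normalClosure_range_eq_top [Finite G] {ι : Type*} [Nonempty ι] (g : ι → G)
    (hg : closure (Set.range fun i => Abelianization.of (g i)) = ⊤) :
    ∃ g' : ι → G, (∀ i, Abelianization.of (g' i) = Abelianization.of (g i)) ∧
      normalClosure (Set.range g') = ⊤ := by
  induction hn : Nat.card G using Nat.strong_induction_on generalizing G with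
  | _ n ih =>
  rcases subsingleton_or_nontrivial G with hG | hG
  · exact ⟨g, fun _ => rfl, Subsingleton.elim _ _⟩
  obtain ⟨N, hN⟩ := exists_isMinimalNormal (G := G)
  have := hN.normal
  have hπ := QuotientGroup.mk'_surjective N
  have hgN : closure (Set.range fun i => Abelianization.of (QuotientGroup.mk' N (g i))) = ⊤ := by
    simp_rw [← Abelianization.map_of, Set.range_comp' (Abelianization.map _),
      ← MonoidHom.map_closure, hg, ← MonoidHom.range_eq_map]
    exact MonoidHom.range_eq_top.mpr (Abelianization.map_surjective hπ)
  obtain ⟨q, hqg, hq⟩ := ih _ (hn ▸ card_quotient_lt hN.ne_bot) _ hgN rfl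
  choose g₁ hg₁q hg₁ using fun i => exists_apply_eq_and_of_eq hπ (hqg i)
  obtain ⟨x, ⟨hxN, hx⟩, hcent⟩ :=
    hN.exists_mem_commutator_mul_notMem_centralizer (g₁ (Classical.arbitrary ι))
  have hofx : Abelianization.of x = 1 := by rwa [← MonoidHom.mem_ker, Abelianization.ker_of]
  have hπx : QuotientGroup.mk' N x = 1 := (QuotientGroup.eq_one_iff x).mpr hxN
  have hg' : ∀ i, Abelianization.of (g₁ i * x) = Abelianization.of (g i) := fun i => by
    rw [map_mul, hofx, mul_one, hg₁]
  refine ⟨fun i => g₁ i * x, hg', hN.normalClosure_eq_top ?_ ?_ ?_⟩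
  · rw [sup_comm, ← QuotientGroup.comap_map_mk', map_normalClosure _ _ hπ, ← Set.range_comp]
    simp_rw [Function.comp_def, map_mul, hπx, mul_one, hg₁q, hq, comap_top]
  · rwa [← Set.range_comp, Function.comp_def, funext hg']
  · exact hcent.imp_right fun h => ⟨_, ⟨_, rfl⟩, h⟩

theorem exists_finset_card_le_max_normalClosure_eq_top [Finite G]
    {t : Finset (Abelianization G)} (ht : closure (t : Set (Abelianization G)) = ⊤) :
    ∃ s : Finset G, s.card ≤ max t.card 1 ∧ normalClosure (s : Set G) = ⊤ := by
  classical
  obtain ⟨t', ht'ne, ht'card, ht'⟩ : ∃ t' : Finset (Abelianization G),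
      t'.Nonempty ∧ t'.card = max t.card 1 ∧ closure (t' : Set (Abelianization G)) = ⊤ := by
    rcases t.eq_empty_or_nonempty with rfl | hne
    · exact ⟨{1}, Finset.singleton_nonempty 1, rfl, by simpa [closure_singleton_one] using ht⟩
    · exact ⟨t, hne, (max_eq_left hne.card_pos).symm, ht⟩
  have := ht'ne.coe_sort
  choose g hg using fun a : t' => Abelianization.of_surjective (a : Abelianization G)
  obtain ⟨g', -, hg'⟩ := exists_normalClosure_range_eq_top g (by simpa [hg] using ht')
  refine ⟨Finset.univ.image g', ?_, by simpa using hg'⟩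
  exact Finset.card_image_le.trans (by simp [ht'card])

end

/-- For a nontrivial finite group `G`, the least number `d` of elements whose normal
closure is all of `G` equals `max (d(Gᵃᵇ)) 1`, where `d(Gᵃᵇ)` is the minimal number of
generators of the abelianization of `G`. -/
theorem normal_generation_rank_eq (G : Type*) [Group G] [Finite G] [Nontrivial G] :
    sInf {d : ℕ | ∃ s : Finset G, s.card = d ∧ Subgroup.normalClosure (s : Set G) = ⊤} =
      max (sInf {d : ℕ | ∃ t : Finset (Abelianization G), t.card = d ∧
        Subgroup.closure (t : Set (Abelianization G)) = ⊤}) 1 := by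
  classical
  set SL := {d : ℕ | ∃ s : Finset G, s.card = d ∧ normalClosure (s : Set G) = ⊤}
  set SR := {d : ℕ | ∃ t : Finset (Abelianization G), t.card = d ∧
    closure (t : Set (Abelianization G)) = ⊤}
  have : Fintype (Abelianization G) := Fintype.ofFinite _
  obtain ⟨t, ht, htop⟩ : sInf SR ∈ SR := Nat.sInf_mem ⟨_, Finset.univ, rfl, by simp⟩
  obtain ⟨s, hs, hstop⟩ := exists_finset_card_le_max_normalClosure_eq_top htop
  refine le_antisymm ((Nat.sInf_le (⟨s, rfl, hstop⟩ : s.card ∈ SL)).trans (ht ▸ hs)) ?_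
  refine le_csInf ⟨_, s, rfl, hstop⟩ ?_
  rintro _ ⟨s, rfl, hs⟩
  refine max_le ?_ ?_
  · have hmem : (s.image Abelianization.of).card ∈ SR := ⟨_, rfl, by
      simpa using closure_image_eq_top_of_normalClosure_eq_top Abelianization.of_surjective hs⟩
    exact (Nat.sInf_le hmem).trans Finset.card_image_le
  · rw [Nat.one_le_iff_ne_zero, Ne, Finset.card_eq_zero]
    rintro rfl
    simp at hs
end

section
/- Let n, k be positive integers with n > 2k, and let σ ∈ S_n be a permutation all of whose cycles have length greater than k. Then for every ρ ∈ S_n conjugate to σ, the subgroup of S_n generated by S_{n-k} (the pointwise stabilizer of {n-k+1,...,n}) together with ρ is all of S_n. In other words, S_{n-k} and ⟨σ⟩ invariably generate S_n. -/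
/-!
Let `s` be the set of the first `n - k` points, so that the stabilizer of the last `k` points
is `Sym(s)` and `s` contains more than half of all points. Since every cycle of `ρ` is longer
than `k`, each point `x` is `ρ^i c` for some `c ∈ s`; as `ρ^i s` meets `s` by pigeonhole, say
in `ρ^i b`, conjugating `swap c b ∈ Sym(s)` by `ρ^i` puts `swap x (ρ^i b)` in the subgroup.
So every point is joined by a transposition in the subgroup to a point of `s`, and all points
of `s` are joined to each other; transitivity of this relation gives all transpositions.
-/

open Equiv Finset

namespace Equiv.Perm

theorem apply_ne_self_of_isConj {α : Type*} {σ ρ : Perm α} (h : IsConj σ ρ)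
    (hσ : ∀ x, σ x ≠ x) (x : α) : ρ x ≠ x := by
  obtain ⟨g, rfl⟩ := isConj_iff.mp h
  intro hx
  rw [mul_apply, mul_apply, ← eq_symm_apply] at hx
  exact hσ _ hx

variable {α : Type*} [Fintype α] [DecidableEq α]

theorem exists_apply_mem_of_card_lt (g : Perm α) {s : Finset α}
    (hs : Fintype.card α < 2 * #s) : ∃ b ∈ s, g b ∈ s := by
  obtain ⟨y, hy⟩ := inter_nonempty_of_card_lt_card_add_card (subset_univ s)
    (subset_univ (s.map g.toEmbedding)) (by rw [card_map, card_univ]; omega)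
  obtain ⟨hys, hyg⟩ := mem_inter.mp hy
  obtain ⟨b, hbs, rfl⟩ := mem_map.mp hyg
  exact ⟨b, hbs, hys⟩

theorem exists_sameCycle_mem_of_card_compl_lt {ρ : Perm α} (s : Finset α)
    (hfix : ∀ x, ρ x ≠ x) (hcyc : ∀ c ∈ ρ.cycleType, #sᶜ < c) (x : α) :
    ∃ c ∈ s, ρ.SameCycle x c := by
  by_contra! hx
  have hmem : #(ρ.cycleOf x).support ∈ ρ.cycleType := by
    rw [cycleType_def]
    refine Multiset.mem_map_of_mem _ ?_
    simpa [cycleOf_mem_cycleFactorsFinset_iff] using hfix x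
  have hsub : (ρ.cycleOf x).support ⊆ sᶜ := fun y hy =>
    mem_compl.mpr fun hys => hx y hys (mem_support_cycleOf_iff.mp hy).1
  exact (card_le_card hsub).not_gt (hcyc _ hmem)

theorem eq_top_of_swap_mem_of_sameCycle_mem {H : Subgroup (Perm α)} {s : Finset α}
    (hs : ∀ x ∈ s, ∀ y ∈ s, swap x y ∈ H) (hcard : Fintype.card α < 2 * #s)
    {ρ : Perm α} (hρ : ρ ∈ H) (hcyc : ∀ x, ∃ c ∈ s, ρ.SameCycle x c) : H = ⊤ := by
  have hlink : ∀ x, ∃ b ∈ s, swap x b ∈ H := by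
    intro x
    obtain ⟨c, hc, i, hi⟩ := hcyc x
    set g := ρ ^ (-i)
    have hgc : g c = x := by simp [g, ← hi, zpow_neg]
    have hg : g ∈ H := zpow_mem hρ _
    obtain ⟨b, hb, hgb⟩ := g.exists_apply_mem_of_card_lt hcard
    refine ⟨g b, hgb, ?_⟩
    rw [← hgc, swap_apply_apply]
    exact mul_mem (mul_mem hg (hs c hc b hb)) (inv_mem hg)
  rw [eq_top_iff, ← closure_isSwap, Subgroup.closure_le]
  rintro _ ⟨x, y, -, rfl⟩
  obtain ⟨a, ha, hxa⟩ := hlink x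
  obtain ⟨b, hb, hyb⟩ := hlink y
  rw [swap_comm] at hyb
  exact SubmonoidClass.swap_mem_trans H hxa (SubmonoidClass.swap_mem_trans H (hs a ha b hb) hyb)

end Equiv.Perm

theorem invariable_generation_Snk_cycles_general {n k : ℕ} (hn : 2 * k < n)
    (σ : Equiv.Perm (Fin n)) (hfix : ∀ x, σ x ≠ x) (hcyc : ∀ c ∈ σ.cycleType, k < c) :
    ∀ ρ : Equiv.Perm (Fin n), IsConj σ ρ →
      Subgroup.closure
        ({π : Equiv.Perm (Fin n) | ∀ x : Fin n, n - k ≤ (x : ℕ) → π x = x} ∪ {ρ}) = ⊤ := by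
  intro ρ hconj
  set s : Finset (Fin n) := {x | (x : ℕ) < n - k}
  have hmem (x : Fin n) : x ∈ s ↔ (x : ℕ) < n - k := by simp [s]
  have hcard : #s = n - k := by rw [Fin.card_filter_val_lt]; omega
  have hρ_cyc : ∀ c ∈ ρ.cycleType, #sᶜ < c := by
    rw [← Perm.isConj_iff_cycleType_eq.mp hconj, card_compl, hcard, Fintype.card_fin]
    intro c hc
    have := hcyc c hc
    omega
  refine Perm.eq_top_of_swap_mem_of_sameCycle_mem (fun x hx y hy => ?_)
    (by rw [Fintype.card_fin, hcard]; omega) (Subgroup.subset_closure (Or.inr rfl))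
    (Perm.exists_sameCycle_mem_of_card_compl_lt s (Perm.apply_ne_self_of_isConj hconj hfix) hρ_cyc)
  refine Subgroup.subset_closure (Or.inl fun z hz => swap_apply_of_ne_of_ne ?_ ?_)
  · rintro rfl; rw [hmem] at hx; omega
  · rintro rfl; rw [hmem] at hy; omega

/-- Let `n > 2k > 0` and let `σ ∈ S_n` have all cycles of length greater than `k`
(in particular no fixed points). Then `S_{n-k}` (the pointwise stabilizer of the last `k`
points) together with any conjugate `ρ` of `σ` generates `S_n`; that is, `S_{n-k}` and
`⟨σ⟩` invariably generate `S_n`. -/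
theorem invariable_generation_Snk_cycles {n k : ℕ} (hk : 0 < k) (hn : 2 * k < n)
    (σ : Equiv.Perm (Fin n)) (hfix : ∀ x, σ x ≠ x) (hcyc : ∀ c ∈ σ.cycleType, k < c) :
    ∀ ρ : Equiv.Perm (Fin n), IsConj σ ρ →
      Subgroup.closure
        ({π : Equiv.Perm (Fin n) | ∀ x : Fin n, n - k ≤ (x : ℕ) → π x = x} ∪ {ρ}) = ⊤ :=
  invariable_generation_Snk_cycles_general hn σ hfix hcyc
end

section
/- Let n_1,...,n_r, k be integers with min{n_1,...,n_r} > 2k > 0, and let g ∈ S_{n_1} × ... × S_{n_r} be such that, for every i, all cycles of the projection of g to S_{n_i} have length greater than k. Then for every conjugate ρ of g in S_{n_1} × ... × S_{n_r}, the subgroup generated by S_{n_1-k} × ... × S_{n_r-k} and ρ is all of S_{n_1} × ... × S_{n_r}. -/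
/-!
Let `s` be the first `n - k` points of a block, so `|s| > n/2` and `|sᶜ| = k`. Every cycle of
`ρ` is longer than `k`, so it meets `s`; hence `G = ⟨Sym(s), ρ⟩` moves every point into `s`.
For each `x`, some `g ∈ G` sends `x` into `s`, and `g⁻¹` then maps `s` into the swap class
`{y | (x y) ∈ G}`, which therefore has more than `n/2` elements. Two such classes meet, and
transpositions compose (`(x y) = (x z)(z y)(x z)`), so `G` contains every transposition.

In the product, the subgroup of elements of `G` supported on block `i` is normalised by the
projection of `G` to block `i`, which is all of `S_{n_i}` by the above; being normal and
containing a transposition of `Sym(s)`, it is all of `S_{n_i}`.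
-/

open Equiv Finset

namespace Equiv.Perm

variable {α : Type*} [DecidableEq α]

lemma swap_mem_of_swap_mem_of_swap_mem {G : Subgroup (Perm α)} {x y z : α}
    (hxz : swap x z ∈ G) (hzy : swap z y ∈ G) : swap x y ∈ G := by
  rcases eq_or_ne y x with rfl | hyx
  · rw [swap_self, ← one_def]
    exact G.one_mem
  rcases eq_or_ne y z with rfl | hyz
  · exact hxz
  rw [← swap_mul_swap_mul_swap hyz hyx, swap_comm z x]
  exact G.mul_mem (G.mul_mem hxz (swap_comm z y ▸ hzy)) hxz

variable [Fintype α]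

lemma exists_sameCycle_mem {σ : Perm α} {k : ℕ} (hcyc : ∀ c ∈ σ.cycleType, k < c) {x : α}
    (hx : σ x ≠ x) {s : Finset α} (hs : #sᶜ ≤ k) : ∃ y ∈ s, σ.SameCycle x y := by
  have hlen : k < #(σ.cycleOf x).support :=
    hcyc _ (cycleType_def σ ▸ Multiset.mem_map_of_mem _
      (cycleOf_mem_cycleFactorsFinset_iff.2 (mem_support.2 hx)))
  obtain ⟨y, hy, hys⟩ := exists_mem_notMem_of_card_lt_card (hs.trans_lt hlen)
  exact ⟨y, by simpa using hys, (mem_support_cycleOf_iff.1 hy).1⟩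

lemma forall_apply_ne_of_isConj {σ τ : Perm α} (h : IsConj σ τ) (hσ : ∀ x, σ x ≠ x) (x : α) :
    τ x ≠ x := by
  obtain ⟨c, rfl⟩ := isConj_iff.1 h
  rw [← mem_support, support_conj]
  simpa using mem_support.2 (hσ (c⁻¹ x))

open scoped Classical in
lemma card_le_card_filter_swap_mem {G : Subgroup (Perm α)} {s : Finset α}
    (hswap : ∀ a ∈ s, ∀ b ∈ s, swap a b ∈ G) {g : Perm α} (hg : g ∈ G) {x : α} (hx : g x ∈ s) :
    #s ≤ #{y | swap x y ∈ G} := by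
  refine card_le_card_of_injOn (fun y => g⁻¹ y) (fun y hy => ?_) g⁻¹.injective.injOn
  have : swap x (g⁻¹ y) = g⁻¹ * swap (g x) y * g⁻¹⁻¹ := by
    simpa using swap_apply_apply g⁻¹ (g x) y
  simp only [coe_filter, mem_univ, true_and]
  rw [Set.mem_ofPred_eq, this]
  exact G.mul_mem (G.mul_mem (G.inv_mem hg) (hswap _ hx _ hy)) (G.inv_mem (G.inv_mem hg))

open scoped Classical in
theorem eq_top_of_swap_mem_of_forall_exists_mem (G : Subgroup (Perm α)) {s : Finset α}
    (hs : Fintype.card α < 2 * #s) (hswap : ∀ a ∈ s, ∀ b ∈ s, swap a b ∈ G)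
    (hmove : ∀ x, ∃ g ∈ G, g x ∈ s) : G = ⊤ := by
  have hclass (x : α) : #s ≤ #{y | swap x y ∈ G} := by
    obtain ⟨g, hg, hgx⟩ := hmove x
    exact card_le_card_filter_swap_mem hswap hg hgx
  rw [eq_top_iff, ← closure_isSwap, Subgroup.closure_le]
  rintro _ ⟨x, y, -, rfl⟩
  obtain ⟨z, hz⟩ := inter_nonempty_of_card_lt_card_add_card (subset_univ {z | swap x z ∈ G})
    (subset_univ {z | swap y z ∈ G}) (by rw [card_univ]; linarith [hclass x, hclass y])
  simp only [mem_inter, mem_filter, mem_univ, true_and] at hz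
  exact swap_mem_of_swap_mem_of_swap_mem hz.1 (swap_comm y z ▸ hz.2)

theorem closure_fixing_union_singleton_eq_top (s : Finset α) (hs : Fintype.card α < 2 * #s)
    {σ : Perm α} (hfix : ∀ x, σ x ≠ x) (hcyc : ∀ c ∈ σ.cycleType, #sᶜ < c) :
    Subgroup.closure ({π : Perm α | ∀ x ∉ s, π x = x} ∪ {σ}) = ⊤ := by
  refine eq_top_of_swap_mem_of_forall_exists_mem _ hs (fun a ha b hb => ?_) fun x => ?_
  · refine Subgroup.subset_closure (Or.inl fun x hx => swap_apply_of_ne_of_ne ?_ ?_) <;>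
      rintro rfl <;> contradiction
  · obtain ⟨y, hy, m, rfl⟩ := exists_sameCycle_mem hcyc (hfix x) le_rfl
    have hσ : σ ∈ Subgroup.closure ({π : Perm α | ∀ x ∉ s, π x = x} ∪ {σ}) :=
      Subgroup.subset_closure (Set.mem_union_right _ rfl)
    exact ⟨σ ^ m, zpow_mem hσ m, hy⟩

theorem closure_fixing_last_union_singleton_eq_top {n k : ℕ} (hn : 2 * k < n)
    {σ : Perm (Fin n)} (hfix : ∀ x, σ x ≠ x) (hcyc : ∀ c ∈ σ.cycleType, k < c) :
    Subgroup.closure ({π : Perm (Fin n) | ∀ x : Fin n, n - k ≤ (x : ℕ) → π x = x} ∪ {σ}) = ⊤ := by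
  set s : Finset (Fin n) := {x | (x : ℕ) < n - k}
  have hs : #s = n - k := by rw [Fin.card_filter_val_lt]; omega
  have hsc : #sᶜ = k := by rw [card_compl, Fintype.card_fin, hs]; omega
  convert closure_fixing_union_singleton_eq_top s (by rw [Fintype.card_fin, hs]; omega)
    hfix (hsc ▸ hcyc) using 6 with π x
  simp [s]

theorem _root_.Subgroup.Normal.eq_top_of_isSwap_mem {N : Subgroup (Perm α)} (hN : N.Normal)
    {τ : Perm α} (hτ : τ.IsSwap) (hτN : τ ∈ N) : N = ⊤ := by
  obtain ⟨a, b, hab, rfl⟩ := hτ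
  rw [eq_top_iff, ← closure_isSwap, Subgroup.closure_le]
  rintro _ ⟨x, y, hxy, rfl⟩
  obtain ⟨c, hc⟩ := isConj_iff.1 (isConj_swap hab hxy)
  rw [← hc]
  exact hN.conj_mem _ hτN c

end Equiv.Perm

section Pi

variable {ι : Type*} [DecidableEq ι] {M : ι → Type*} [∀ i, Group (M i)]

theorem Pi.conj_mulSingle (g : ∀ i, M i) (i : ι) (x : M i) :
    g * Pi.mulSingle i x * g⁻¹ = Pi.mulSingle i (g i * x * (g i)⁻¹) := by
  ext j
  rcases eq_or_ne j i with rfl | hji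
  · simp
  · simp [Pi.mulSingle_eq_of_ne hji]

theorem Subgroup.map_eval_le_normalizer_comap_mulSingle (G : Subgroup (∀ i, M i)) (i : ι) :
    G.map (Pi.evalMonoidHom M i) ≤
      Subgroup.normalizer (G.comap (MonoidHom.mulSingle M i) : Set (M i)) := by
  rintro _ ⟨g, hg, rfl⟩
  rw [Subgroup.mem_normalizer_iff]
  intro x
  simp only [Subgroup.mem_comap, MonoidHom.mulSingle_apply, Pi.evalMonoidHom_apply,
    ← Pi.conj_mulSingle]
  exact ⟨fun h => G.mul_mem (G.mul_mem hg h) (G.inv_mem hg), fun h => by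
    simpa [mul_assoc] using G.mul_mem (G.mul_mem (G.inv_mem hg) h) hg⟩

theorem Subgroup.eq_top_of_forall_mulSingle_mem [Fintype ι] (G : Subgroup (∀ i, M i))
    (h : ∀ i (x : M i), Pi.mulSingle i x ∈ G) : G = ⊤ := by
  rw [eq_top_iff]
  intro x _
  rw [← Finset.noncommProd_mulSingle x]
  exact Subgroup.noncommProd_mem _ _ fun i _ => h i (x i)

theorem Subgroup.mulSingle_mem_of_map_eval_eq_top {α : ι → Type*} [∀ i, DecidableEq (α i)]
    [∀ i, Fintype (α i)] (G : Subgroup (∀ i, Perm (α i))) {i : ι}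
    (hG : G.map (Pi.evalMonoidHom _ i) = ⊤) {τ : Perm (α i)} (hτ : τ.IsSwap)
    (hτG : Pi.mulSingle i τ ∈ G) (σ : Perm (α i)) : Pi.mulSingle i σ ∈ G := by
  have hnormal : (G.comap (MonoidHom.mulSingle _ i)).Normal :=
    Subgroup.normalizer_eq_top_iff.1 <| top_le_iff.1 <|
      hG ▸ G.map_eval_le_normalizer_comap_mulSingle i
  rw [← MonoidHom.mulSingle_apply, ← Subgroup.mem_comap, hnormal.eq_top_of_isSwap_mem hτ hτG]
  trivial

end Pi

open Equiv.Perm in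
/-- If `min n i > 2k > 0` and `g ∈ S_{n 1} × … × S_{n r}` has, in every coordinate, all
cycles of length greater than `k` (in particular no fixed points), then the product
`S_{n 1 - k} × … × S_{n r - k}` (pointwise stabilizers of the last `k` points of each
block) together with any conjugate `ρ` of `g` generates the whole product; that is, they
invariably generate it. -/
theorem product_invariable_generation {r k : ℕ} (n : Fin r → ℕ) (hk : 0 < k)
    (hn : ∀ i, 2 * k < n i) (g : ∀ i, Equiv.Perm (Fin (n i)))
    (hfix : ∀ i x, g i x ≠ x) (hcyc : ∀ i, ∀ c ∈ (g i).cycleType, k < c) :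
    ∀ ρ : ∀ i, Equiv.Perm (Fin (n i)), IsConj g ρ →
      Subgroup.closure
        ({π : ∀ i, Equiv.Perm (Fin (n i)) |
            ∀ i, ∀ x : Fin (n i), n i - k ≤ (x : ℕ) → π i x = x} ∪ {ρ}) = ⊤ := by
  intro ρ hρ
  set G := Subgroup.closure ({π : ∀ i, Equiv.Perm (Fin (n i)) |
    ∀ i, ∀ x : Fin (n i), n i - k ≤ (x : ℕ) → π i x = x} ∪ {ρ})
  refine G.eq_top_of_forall_mulSingle_mem fun i => ?_
  have hfixing (τ : Perm (Fin (n i))) (hτ : ∀ x : Fin (n i), n i - k ≤ (x : ℕ) → τ x = x) :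
      Pi.mulSingle i τ ∈ G := by
    refine Subgroup.subset_closure (Or.inl fun j x hx => ?_)
    rcases eq_or_ne j i with rfl | hji
    · simpa using hτ x hx
    · simp [Pi.mulSingle_eq_of_ne hji]
  have hρi : IsConj (g i) (ρ i) := (Pi.evalMonoidHom _ i).map_isConj hρ
  have hmap : G.map (Pi.evalMonoidHom _ i) = ⊤ := by
    rw [eq_top_iff, ← closure_fixing_last_union_singleton_eq_top (hn i)
      (forall_apply_ne_of_isConj hρi (hfix i)) (isConj_iff_cycleType_eq.1 hρi ▸ hcyc i),
      Subgroup.closure_le]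
    rintro τ (hτ | rfl)
    · exact ⟨_, hfixing τ hτ, by simp⟩
    · exact ⟨ρ, Subgroup.subset_closure (Or.inr rfl), rfl⟩
  have hswap : Pi.mulSingle i (swap (⟨0, by grind⟩ : Fin (n i)) ⟨1, by grind⟩) ∈ G :=
    hfixing _ fun x hx => swap_apply_of_ne_of_ne (by grind) (by grind)
  exact G.mulSingle_mem_of_map_eval_eq_top hmap ⟨_, _, by simp, rfl⟩ hswap
end

section
/- Let S be a semigroup and z an element of the center of S. Then there exists a monoid S[z^{-1}] and a semigroup homomorphism φ: S → S[z^{-1}] with φ(z) invertible, satisfying the universal property: for every monoid M and semigroup homomorphism ψ: S → M with ψ(z) invertible, there is a unique monoid homomorphism θ: S[z^{-1}] → M with ψ = θ ∘ φ. -/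
universe u v

/-! Adjoin a unit to `S` and Ore-localize the monoid `WithOne S` at the powers of `z`. Since these
powers are central, the Ore condition holds trivially, and the universal properties of `WithOne`
(semigroup maps into monoids) and of the Ore localization (maps inverting the powers of `z`)
compose to the required one. The fraction `w /ₒ z ^ m` plays the role of `z⁻ᵐw`. -/

namespace OreLocalization

variable {R : Type*} [Monoid R]

abbrev oreSetOfLECenter {Z : Submonoid R} (hZ : Z ≤ Submonoid.center R) : OreSet Z where
  ore_right_cancel r₁ r₂ s h := ⟨s, by
    rwa [← Submonoid.mem_center_iff.mp (hZ s.2) r₁, ← Submonoid.mem_center_iff.mp (hZ s.2) r₂]⟩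
  oreNum r _ := r
  oreDenom _ s := s
  ore_eq r s := (Submonoid.mem_center_iff.mp (hZ s.2) r).symm

theorem existsUnique_comp_numeratorHom_eq {Z : Submonoid R} [OreSet Z] {N : Type*} [Monoid N]
    (f : R →* N) (hf : ∀ s : Z, IsUnit (f s)) :
    ∃! θ : R[Z⁻¹] →* N, θ.comp numeratorHom = f := by
  set fZ : Z →* Nˣ := IsUnit.liftRight (f.comp Z.subtype) hf
  have hfZ : ∀ s : Z, f s = fZ s := fun s => (IsUnit.coe_liftRight (f.comp Z.subtype) hf s).symm
  refine ⟨universalMulHom f fZ hfZ, MonoidHom.ext fun _ => universalMulHom_commutes f fZ hfZ, ?_⟩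
  rintro θ rfl
  exact universalMulHom_unique _ fZ hfZ θ fun _ => rfl

end OreLocalization

theorem WithOne.coe_mem_center {S : Type*} [Semigroup S] {z : S} (hz : z ∈ Set.center S) :
    (z : WithOne S) ∈ Set.center (WithOne S) := by
  refine Semigroup.mem_center_iff.mpr fun x => WithOne.cases_on x (by simp) fun s => ?_
  exact_mod_cast Semigroup.mem_center_iff.mp hz s

theorem WithOne.existsUnique_toMulHom_comp_eq {S M N : Type*} [Semigroup S] [Monoid M] [Monoid N]
    (φ : WithOne S →* M) (ψ : S →ₙ* N)
    (h : ∃! θ : M →* N, θ.comp φ = WithOne.lift ψ) :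
    ∃! θ : M →* N, θ.toMulHom.comp (φ.toMulHom.comp WithOne.coeMulHom) = ψ := by
  refine existsUnique_congr (fun θ => ?_) |>.mp h
  rw [← WithOne.lift.symm_apply_eq]
  rfl

/-- Localization of a semigroup at a central element: for every semigroup `S` and central
element `z ∈ S`, there exist a monoid `M` and a semigroup homomorphism `φ : S → M` with
`φ z` invertible, such that every semigroup homomorphism `ψ : S → N` to a monoid with
`ψ z` invertible factors uniquely through `φ` via a monoid homomorphism. -/
theorem semigroup_localization_at_central {S : Type u} [Semigroup S] (z : S)
    (hz : ∀ s : S, z * s = s * z) :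
    ∃ (M : MonCat.{u}) (φ : S →ₙ* M), IsUnit (φ z) ∧
      ∀ (N : MonCat.{v}) (ψ : S →ₙ* N), IsUnit (ψ z) →
        ∃! θ : (M : Type u) →* N, θ.toMulHom.comp φ = ψ := by
  have hz_center : (z : WithOne S) ∈ Submonoid.center (WithOne S) :=
    WithOne.coe_mem_center (Semigroup.mem_center_iff.mpr fun s => (hz s).symm)
  let Z := Submonoid.powers (z : WithOne S)
  let _ : OreLocalization.OreSet Z :=
    OreLocalization.oreSetOfLECenter (Submonoid.powers_le.mpr hz_center)
  refine ⟨MonCat.of (OreLocalization Z (WithOne S)),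
    OreLocalization.numeratorHom.toMulHom.comp WithOne.coeMulHom,
    OreLocalization.numerator_isUnit ⟨(z : WithOne S), Submonoid.mem_powers _⟩, fun N ψ hψ => ?_⟩
  refine WithOne.existsUnique_toMulHom_comp_eq _ ψ
    (OreLocalization.existsUnique_comp_numeratorHom_eq _ ?_)
  rintro ⟨_, n, rfl⟩
  simpa only [map_pow, WithOne.lift_coe] using hψ.pow n
end

section
/- Let X be a finite rack, and for x ∈ X let m_x be the order of the image of x in Inn(X). Let z = ∏_{x∈X} x^{m_x} in the structure semigroup S_X (this element is central). Then the natural monoid homomorphism S_X[z^{-1}] → Γ_X to the structure group of X is an isomorphism. -/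
open Quandles

universe u

/-- The defining congruence of the structure semigroup `S_X = ⟨X : x y = (x ◃ y) x⟩`
of a rack (written here with Mathlib's left-rack convention, mirroring `x y = y x^y`). -/
def structCon (X : Type u) [Rack X] : Con (FreeSemigroup X) :=
  conGen (fun a b => ∃ x y : X, a = .of x * .of y ∧ b = .of (x ◃ y) * .of x)

/-- The structure semigroup `S_X` of a rack `X`. -/
def StructSemigroup (X : Type u) [Rack X] := (structCon X).Quotient

instance (X : Type u) [Rack X] : Semigroup (StructSemigroup X) := by
  unfold StructSemigroup; infer_instance

/-- The canonical map `X → S_X`. -/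
def toStructSemigroup {X : Type u} [Rack X] (x : X) : StructSemigroup X :=
  ((FreeSemigroup.of x : FreeSemigroup X) : (structCon X).Quotient)

/-- `sPow x n = x^(n+1)` in a semigroup. -/
def sPow {S : Type*} [Semigroup S] (x : S) : ℕ → S
  | 0 => x
  | n + 1 => sPow x n * x

/-- Product of a nonempty list in a semigroup, `sProdList a l = a * l.prod`. -/
def sProdList {S : Type*} [Semigroup S] : S → List S → S
  | a, [] => a
  | a, b :: l => a * sProdList b l

/-- The central element `z = ∏_{x ∈ X} x^{m_x}` of `S_X`, where `m_x` is the order of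
the inner automorphism determined by `x`. -/
noncomputable def rackZ (X : Type u) [Rack X] [Fintype X] [Nonempty X] :
    StructSemigroup X :=
  match (Finset.univ : Finset X).toList.map
      (fun x => sPow (toStructSemigroup x) (orderOf (Rack.act' x) - 1)) with
  | [] => toStructSemigroup (Classical.arbitrary X)
  | a :: l => sProdList a l

/-! Since `x y = (x ◃ y) x` in `S_X`, we get `x^m y = (act' x ^ m) y · x^m`; for `m = m_x` the
permutation `act' x ^ m` is trivial, so each `x^{m_x}` is central. Hence `z` is a product of
pairwise commuting factors, and inverting `z` inverts each `x^{m_x}` and thus each generator.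
The generators then form a rack map into the conjugation quandle of the units of the
localization, which yields a homomorphism `Γ_X → S_X[z⁻¹]` inverse to the natural one: both
composites are identities by the two universal properties. -/

theorem List.isUnit_of_mem_of_isUnit_prod {M : Type*} [Monoid M] {l : List M}
    (hc : l.Pairwise Commute) (hl : IsUnit l.prod) {a : M} (ha : a ∈ l) : IsUnit a := by
  induction l with
  | nil => cases ha
  | cons b l ih =>
    rw [List.pairwise_cons] at hc
    rw [List.prod_cons] at hl
    obtain ⟨hb, hlu⟩ := (Commute.list_prod_right l b hc.1).isUnit_mul_iff.mp hl
    rcases List.mem_cons.mp ha with rfl | ha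
    · exact hb
    · exact ih hc.2 hlu ha

section SemigroupPowers

variable {S M : Type*} [Semigroup S] [Monoid M]

theorem map_sPow (φ : S →ₙ* M) (a : S) (n : ℕ) : φ (sPow a n) = φ a ^ (n + 1) := by
  induction n with
  | zero => simp [sPow]
  | succ n ih => rw [sPow, map_mul, ih, ← pow_succ]

theorem map_sProdList (φ : S →ₙ* M) (a : S) (l : List S) :
    φ (sProdList a l) = ((a :: l).map φ).prod := by
  induction l generalizing a with
  | nil => simp [sProdList]
  | cons b l ih =>
    rw [sProdList, map_mul, ih]
    simp only [List.map_cons, List.prod_cons]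

end SemigroupPowers

namespace StructSemigroup

variable {X : Type u} [Rack X]

theorem toStructSemigroup_mul (x y : X) :
    toStructSemigroup x * toStructSemigroup y
      = toStructSemigroup (x ◃ y) * toStructSemigroup x :=
  (structCon X).eq.mpr (ConGen.Rel.of _ _ ⟨x, y, rfl, rfl⟩)

@[elab_as_elim]
theorem induction_on {p : StructSemigroup X → Prop} (s : StructSemigroup X)
    (of : ∀ x : X, p (toStructSemigroup x)) (mul : ∀ a b, p a → p b → p (a * b)) : p s := by
  induction s using Con.induction_on with
  | H a =>
    induction a using FreeSemigroup.recOnMul with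
    | ih1 x => exact of x
    | ih2 a b ha hb => exact mul _ _ ha hb

theorem hom_ext {M : Type*} [Mul M] {f g : StructSemigroup X →ₙ* M}
    (h : ∀ x, f (toStructSemigroup x) = g (toStructSemigroup x)) : f = g :=
  MulHom.ext fun s => induction_on s h fun a b ha hb => by rw [map_mul, map_mul, ha, hb]

theorem sPow_toStructSemigroup_mul (x y : X) (n : ℕ) :
    sPow (toStructSemigroup x) n * toStructSemigroup y
      = toStructSemigroup ((Rack.act' x ^ (n + 1)) y) * sPow (toStructSemigroup x) n := by
  induction n generalizing y with
  | zero => simpa [sPow, Rack.act'_apply] using toStructSemigroup_mul x y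
  | succ n ih =>
    have hact : (Rack.act' x ^ (n + 2)) y = (Rack.act' x ^ (n + 1)) (x ◃ y) := by
      rw [pow_succ, Equiv.Perm.mul_apply, Rack.act'_apply]
    simp only [sPow]
    rw [mul_assoc, toStructSemigroup_mul x y, ← mul_assoc, ih (x ◃ y), ← hact, mul_assoc]

variable [Fintype X]

noncomputable def centralPow (x : X) : StructSemigroup X :=
  sPow (toStructSemigroup x) (orderOf (Rack.act' x) - 1)

theorem commute_centralPow (x : X) (s : StructSemigroup X) : Commute (centralPow x) s := by
  induction s using induction_on with
  | of y =>
    have hpos : 0 < orderOf (Rack.act' x) := orderOf_pos _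
    rw [Commute, SemiconjBy, centralPow, sPow_toStructSemigroup_mul, Nat.sub_add_cancel hpos,
      pow_orderOf_eq_one, Equiv.Perm.one_apply]
  | mul a b ha hb => exact ha.mul_right hb

variable [Nonempty X] {M : Type*} [Monoid M]

theorem map_rackZ (φ : StructSemigroup X →ₙ* M) :
    φ (rackZ X) = ((Finset.univ : Finset X).toList.map (φ ∘ centralPow)).prod := by
  have hne : (Finset.univ : Finset X).toList.map centralPow ≠ [] := by
    simp [Finset.univ_nonempty.ne_empty]
  obtain ⟨a, l, hl⟩ := List.exists_cons_of_ne_nil hne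
  have hz : rackZ X = sProdList a l := by
    have hl' : (Finset.univ : Finset X).toList.map
        (fun x => sPow (toStructSemigroup x) (orderOf (Rack.act' x) - 1)) = a :: l := hl
    rw [rackZ, hl']
  rw [hz, map_sProdList, ← hl, List.map_map]

theorem isUnit_map_toStructSemigroup {φ : StructSemigroup X →ₙ* M}
    (hz : IsUnit (φ (rackZ X))) (x : X) : IsUnit (φ (toStructSemigroup x)) := by
  have hcomm : ((Finset.univ : Finset X).toList.map (φ ∘ centralPow)).Pairwise Commute :=
    List.pairwise_map.mpr (List.pairwise_of_forall fun y y' => (commute_centralPow y _).map φ)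
  have hx : IsUnit (φ (centralPow x)) :=
    List.isUnit_of_mem_of_isUnit_prod hcomm (map_rackZ φ ▸ hz)
      (List.mem_map_of_mem (f := φ ∘ centralPow) (by simp))
  rw [centralPow, map_sPow] at hx
  exact isUnit_pow_succ_iff.mp hx

end StructSemigroup

namespace Rack.EnvelGroup

variable {X : Type u} [Rack X]

theorem hom_ext {G : Type*} [Group G] {f g : EnvelGroup X →* G}
    (h : ∀ x, f (toEnvelGroup X x) = g (toEnvelGroup X x)) : f = g :=
  toEnvelGroup.map.symm.injective (ShelfHom.ext (funext h))

variable {M : Type*} [Monoid M]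

noncomputable def unitsShelfHom (φ : StructSemigroup X →ₙ* M)
    (hφ : ∀ x, IsUnit (φ (toStructSemigroup x))) : X →◃ Quandle.Conj Mˣ where
  toFun x := (hφ x).unit
  map_act' {x y} := by
    change (hφ (x ◃ y)).unit = (hφ x).unit * (hφ y).unit * (hφ x).unit⁻¹
    rw [eq_mul_inv_iff_mul_eq]
    ext
    rw [Units.val_mul, Units.val_mul, IsUnit.unit_spec, IsUnit.unit_spec, IsUnit.unit_spec,
      ← map_mul, ← map_mul, ← StructSemigroup.toStructSemigroup_mul]

noncomputable def liftOfIsUnit (φ : StructSemigroup X →ₙ* M)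
    (hφ : ∀ x, IsUnit (φ (toStructSemigroup x))) : EnvelGroup X →* M :=
  (Units.coeHom M).comp (toEnvelGroup.map (unitsShelfHom φ hφ))

theorem liftOfIsUnit_toEnvelGroup (φ : StructSemigroup X →ₙ* M)
    (hφ : ∀ x, IsUnit (φ (toStructSemigroup x))) (x : X) :
    liftOfIsUnit φ hφ (toEnvelGroup X x) = φ (toStructSemigroup x) := by
  have h := congrFun (congrArg ShelfHom.toFun (toEnvelGroup.univ X Mˣ (unitsShelfHom φ hφ))) x
  simp only [liftOfIsUnit, MonoidHom.comp_apply, Units.coeHom_apply]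
  exact (congrArg Units.val h).symm.trans (hφ x).unit_spec

end Rack.EnvelGroup

/-- For a finite rack `X`, the localization `S_X[z⁻¹]` of the structure semigroup at the
central element `z = ∏_{x ∈ X} x^{m_x}` is isomorphic, via the natural monoid
homomorphism, to the structure group `Γ_X`: any monoid `L` receiving `S_X` and
satisfying the universal property of the localization at `z` maps isomorphically onto
`Γ_X` under the natural homomorphism (the one compatible with the generators). -/
theorem structSemigroup_localization_iso_envelGroup (X : Type u) [Rack X] [Fintype X]
    [Nonempty X] (L : MonCat.{u}) (φ : StructSemigroup X →ₙ* L)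
    (hunit : IsUnit (φ (rackZ X)))
    (huniv : ∀ (N : MonCat.{u}) (ψ : StructSemigroup X →ₙ* N), IsUnit (ψ (rackZ X)) →
      ∃! θ : (L : Type u) →* N, θ.toMulHom.comp φ = ψ)
    (θ : (L : Type u) →* Rack.EnvelGroup X)
    (hθ : ∀ x : X, θ (φ (toStructSemigroup x)) = Rack.toEnvelGroup X x) :
    Function.Bijective θ := by
  obtain ⟨_, -, huniq⟩ := huniv L φ hunit
  set ρ := Rack.EnvelGroup.liftOfIsUnit φ (StructSemigroup.isUnit_map_toStructSemigroup hunit)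
  have hleft : ρ.comp θ = MonoidHom.id L :=
    (huniq _ (StructSemigroup.hom_ext fun x => by
      simp [ρ, hθ, Rack.EnvelGroup.liftOfIsUnit_toEnvelGroup])).trans
      (huniq _ (StructSemigroup.hom_ext fun _ => rfl)).symm
  have hright : θ.comp ρ = MonoidHom.id _ :=
    Rack.EnvelGroup.hom_ext fun x => by simp [ρ, hθ, Rack.EnvelGroup.liftOfIsUnit_toEnvelGroup]
  exact Function.bijective_iff_has_inverse.mpr
    ⟨ρ, DFunLike.congr_fun hleft, DFunLike.congr_fun hright⟩
end
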